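/- Let H be an acceptable Hintikka set and s, t closed formulas. If (s ∧ t) ∈ H, then s ∈ H and t ∈ H. -/
import Mathlib


namespace HintikkaHOL

/-- Simple types over base types `o` (Booleans) and `i` (individuals). -/
inductive Ty : Type
  | o : Ty
  | i : Ty
  | arr : Ty → Ty → Ty
deriving DecidableEq

open Ty

/-- Typed de Bruijn variables. -/
inductive Var : List Ty → Ty → Type
  | vz {Γ τ} : Var (τ :: Γ) τ
  | vs {Γ σ τ} : Var Γ τ → Var (σ :: Γ) τ

/-- Terms of Church's type theory over a signature `S` of parameters,
with primitive equality `eq τ : τ → τ → o` as the only logical constant. -/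
inductive Tm (S : Ty → Type) : List Ty → Ty → Type
  | var {Γ τ} : Var Γ τ → Tm S Γ τ
  | par {Γ τ} : S τ → Tm S Γ τ
  | eq {Γ} (τ : Ty) : Tm S Γ (arr τ (arr τ o))
  | app {Γ a b} : Tm S Γ (arr a b) → Tm S Γ a → Tm S Γ b
  | lam {Γ a b} : Tm S (a :: Γ) b → Tm S Γ (arr a b)

variable {S : Ty → Type}

/-- Renamings. -/
abbrev Ren (Γ Δ : List Ty) : Type := ∀ τ, Var Γ τ → Var Δ τ

def Ren.lift {Γ Δ} (r : Ren Γ Δ) (σ : Ty) : Ren (σ :: Γ) (σ :: Δ)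
  | _, .vz => .vz
  | _, .vs w => .vs (r _ w)

def rename {Γ Δ} (r : Ren Γ Δ) : ∀ {τ}, Tm S Γ τ → Tm S Δ τ
  | _, .var v => .var (r _ v)
  | _, .par p => .par p
  | _, .eq τ => .eq τ
  | _, .app f a => .app (rename r f) (rename r a)
  | _, .lam b => .lam (rename (Ren.lift r _) b)

/-- Substitutions. -/
abbrev Sub (S : Ty → Type) (Γ Δ : List Ty) : Type := ∀ τ, Var Γ τ → Tm S Δ τ

def Sub.lift {Γ Δ} (s : Sub S Γ Δ) (σ : Ty) : Sub S (σ :: Γ) (σ :: Δ)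
  | _, .vz => .var .vz
  | _, .vs w => rename (fun _ u => Var.vs u) (s _ w)

def subst {Γ Δ} (s : Sub S Γ Δ) : ∀ {τ}, Tm S Γ τ → Tm S Δ τ
  | _, .var v => s _ v
  | _, .par p => .par p
  | _, .eq τ => .eq τ
  | _, .app f a => .app (subst s f) (subst s a)
  | _, .lam b => .lam (subst (Sub.lift s _) b)

/-- The substitution sending the outermost variable to `a`. -/
def Sub.single {Γ σ} (a : Tm S Γ σ) : Sub S (σ :: Γ) Γ
  | _, .vz => a
  | _, .vs w => .var w

def subst1 {Γ σ τ} (a : Tm S Γ σ) (b : Tm S (σ :: Γ) τ) : Tm S Γ τ :=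
  subst (Sub.single a) b

/-- Weakening of a closed term into any context. -/
def Ren.fromEmpty {Γ} : Ren [] Γ := fun _ v => nomatch v

def wk0 {Γ τ} (t : Tm S [] τ) : Tm S Γ τ :=
  rename Ren.fromEmpty t

/-- The equation `s =^τ t`. -/
def eqT {Γ} (τ : Ty) (s t : Tm S Γ τ) : Tm S Γ o :=
  .app (.app (.eq τ) s) t

/-- `⊤ := (=^o) =^{ooo} (=^o)`. -/
def topT {Γ} : Tm S Γ o :=
  eqT (arr o (arr o o)) (.eq o) (.eq o)

/-- `⊥ := (λP:o. P) =^{oo} (λP:o. ⊤)`. -/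
def botT {Γ} : Tm S Γ o :=
  eqT (arr o o) (.lam (.var .vz)) (.lam topT)

/-- `¬ := λP:o. P =^o ⊥`. -/
def notC {Γ} : Tm S Γ (arr o o) :=
  .lam (eqT o (.var .vz) botT)

/-- `¬ s`. -/
def negT {Γ} (s : Tm S Γ o) : Tm S Γ o :=
  .app notC s

/-- `∧ := λP Q. (λF:ooo. F ⊤ ⊤) =^{o(ooo)} (λF. F P Q)`. -/
def andC {Γ} : Tm S Γ (arr o (arr o o)) :=
  .lam (.lam (eqT (arr (arr o (arr o o)) o)
    (.lam (.app (.app (.var .vz) topT) topT))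
    (.lam (.app (.app (.var .vz) (.var (.vs (.vs .vz)))) (.var (.vs .vz))))))

/-- `∨ := λP Q. ¬(¬P ∧ ¬Q)`. -/
def orC {Γ} : Tm S Γ (arr o (arr o o)) :=
  .lam (.lam (negT (.app (.app andC (negT (.var (.vs .vz)))) (negT (.var .vz)))))

/-- `⇒ := λP Q. ¬P ∨ Q`. -/
def impC {Γ} : Tm S Γ (arr o (arr o o)) :=
  .lam (.lam (.app (.app orC (negT (.var (.vs .vz)))) (.var .vz)))

/-- `Π^τ := λP:oτ. P =^{oτ} (λX:τ. ⊤)`. -/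
def piC {Γ} (τ : Ty) : Tm S Γ (arr (arr τ o) o) :=
  .lam (eqT (arr τ o) (.var .vz) (.lam topT))

/-- Leibniz equality `s ≐ t := Π^{oτ} (λP:oτ. (P s) ⇒ (P t))`. -/
def leibT {Γ τ} (s t : Tm S Γ τ) : Tm S Γ o :=
  .app (piC (arr τ o))
    (.lam (.app (.app impC (.app (.var .vz) (rename (fun _ v => Var.vs v) s)))
                (.app (.var .vz) (rename (fun _ v => Var.vs v) t))))

/-- βη-conversion. -/
inductive Conv : ∀ {Γ : List Ty} {τ : Ty}, Tm S Γ τ → Tm S Γ τ → Prop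
  | refl {Γ τ} (s : Tm S Γ τ) : Conv s s
  | symm {Γ τ} {s t : Tm S Γ τ} : Conv s t → Conv t s
  | trans {Γ τ} {s t u : Tm S Γ τ} : Conv s t → Conv t u → Conv s u
  | appCongr {Γ a b} {f f' : Tm S Γ (arr a b)} {s s' : Tm S Γ a} :
      Conv f f' → Conv s s' → Conv (.app f s) (.app f' s')
  | lamCongr {Γ a b} {s s' : Tm S (a :: Γ) b} :
      Conv s s' → Conv (.lam s) (.lam s')
  | beta {Γ a b} (body : Tm S (a :: Γ) b) (s : Tm S Γ a) :
      Conv (.app (.lam body) s) (subst1 s body)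
  | eta {Γ a b} (f : Tm S Γ (arr a b)) :
      Conv (.lam (.app (rename (fun _ v => Var.vs v) f) (.var .vz))) f

/-- Atomic formulas: head symbol is a parameter (or a variable). -/
inductive Atomic : ∀ {Γ : List Ty} {τ : Ty}, Tm S Γ τ → Prop
  | par {Γ τ} (p : S τ) : Atomic (Tm.par (Γ := Γ) p)
  | var {Γ τ} (v : Var Γ τ) : Atomic (Tm.var (S := S) v)
  | app {Γ a b} {f : Tm S Γ (arr a b)} {s : Tm S Γ a} : Atomic f → Atomic (.app f s)

/-- Paired spines of closed arguments, for the decomposition property `∇_d`: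
a value of `Spine2 S σ τ` is a list of pairs `(sⁱ, tⁱ)` of closed terms turning a head
of type `σ` into two applications `h s¹ … sⁿ` and `h t¹ … tⁿ` of type `τ`. -/
inductive Spine2 (S : Ty → Type) : Ty → Ty → Type
  | nil {τ} : Spine2 S τ τ
  | cons {a σ τ} (s t : Tm S [] a) (rest : Spine2 S σ τ) : Spine2 S (arr a σ) τ

def appSpineL : ∀ {σ τ}, Tm S [] σ → Spine2 S σ τ → Tm S [] τ
  | _, _, h, .nil => h
  | _, _, h, .cons s _ rest => appSpineL (.app h s) rest

def appSpineR : ∀ {σ τ}, Tm S [] σ → Spine2 S σ τ → Tm S [] τ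
  | _, _, h, .nil => h
  | _, _, h, .cons _ t rest => appSpineR (.app h t) rest

/-- `∃ i, (sⁱ ≠ tⁱ) ∈ H` for a paired spine. -/
def ExistsNeq (H : Set (Tm S [] o)) : ∀ {σ τ}, Spine2 S σ τ → Prop
  | _, _, .nil => False
  | _, _, .cons (a := a) s t rest => negT (eqT a s t) ∈ H ∨ ExistsNeq H rest

/-- Steen's acceptable Hintikka sets: sets of closed formulas (sentences) satisfying
the ten properties `∇_c, ∇_βη, ∇_=^r, ∇_=^s, ∇_b^+, ∇_b^-, ∇_f^+, ∇_f^-, ∇_m, ∇_d`. -/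
structure Acceptable (S : Ty → Type) (H : Set (Tm S [] o)) : Prop where
  nabla_c : ∀ s : Tm S [] o, ¬ (s ∈ H ∧ negT s ∈ H)
  nabla_betaEta : ∀ s t : Tm S [] o, Conv s t → s ∈ H → t ∈ H
  nabla_eq_r : ∀ {τ} (s : Tm S [] τ), negT (eqT τ s s) ∉ H
  nabla_eq_s : ∀ {τ} (u : Tm S [τ] o) (s t : Tm S [] τ),
      subst1 s u ∈ H → eqT τ s t ∈ H → subst1 t u ∈ H
  nabla_b_pos : ∀ s t : Tm S [] o, eqT o s t ∈ H →
      (s ∈ H ∧ t ∈ H) ∨ (negT s ∈ H ∧ negT t ∈ H)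
  nabla_b_neg : ∀ s t : Tm S [] o, negT (eqT o s t) ∈ H →
      (s ∈ H ∧ negT t ∈ H) ∨ (negT s ∈ H ∧ t ∈ H)
  nabla_f_pos : ∀ {a b} (f g : Tm S [] (arr a b)), eqT (arr a b) f g ∈ H →
      ∀ s : Tm S [] a, eqT b (.app f s) (.app g s) ∈ H
  nabla_f_neg : ∀ {a b} (f g : Tm S [] (arr a b)), negT (eqT (arr a b) f g) ∈ H →
      ∃ w : S a, negT (eqT b (.app f (.par w)) (.app g (.par w))) ∈ H
  nabla_m : ∀ s t : Tm S [] o, Atomic s → Atomic t → s ∈ H → negT t ∈ H →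
      negT (eqT o s t) ∈ H
  nabla_d : ∀ {σ τ} (h : Tm S [] σ) (sp : Spine2 S σ τ),
      negT (eqT τ (appSpineL h sp) (appSpineR h sp)) ∈ H → ExistsNeq H sp

/-- `H` is saturated iff `s ∈ H` or `¬s ∈ H` for every closed formula `s`. -/
def Saturated (H : Set (Tm S [] o)) : Prop :=
  ∀ s : Tm S [] o, s ∈ H ∨ negT s ∈ H

variable {S : Ty → Type} {H : Set (Tm S [] Ty.o)}


section AndMemAux

variable {S : Ty → Type}

theorem Ren.lift_id {Γ} (σ : Ty) :
    Ren.lift (fun τ (v : Var Γ τ) => v) σ = fun τ v => v := by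
  funext τ v; cases v <;> rfl

theorem rename_id : ∀ {Γ τ} (u : Tm S Γ τ), rename (fun _ v => v) u = u
  | _, _, .var _ => rfl
  | _, _, .par _ => rfl
  | _, _, .eq _ => rfl
  | _, _, .app f a => by rw [rename, rename_id f, rename_id a]
  | _, _, .lam b => by rw [rename, Ren.lift_id, rename_id b]

theorem Ren.lift_comp {Γ Δ E} (r1 : Ren Γ Δ) (r2 : Ren Δ E) (σ : Ty) :
    (fun τ v => Ren.lift r2 σ τ (Ren.lift r1 σ τ v)) = Ren.lift (fun τ v => r2 τ (r1 τ v)) σ := by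
  funext τ v; cases v <;> rfl

theorem rename_rename : ∀ {Γ Δ E : List Ty} {τ} (r1 : Ren Γ Δ) (r2 : Ren Δ E) (u : Tm S Γ τ),
    rename r2 (rename r1 u) = rename (fun τ v => r2 τ (r1 τ v)) u
  | _, _, _, _, _, _, .var _ => rfl
  | _, _, _, _, _, _, .par _ => rfl
  | _, _, _, _, _, _, .eq _ => rfl
  | _, _, _, _, r1, r2, .app f a => by
      rw [rename, rename, rename, rename_rename r1 r2 f, rename_rename r1 r2 a]
  | _, _, _, _, r1, r2, .lam b => by
      rw [rename, rename, rename, rename_rename (Ren.lift r1 _) (Ren.lift r2 _) b,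
        Ren.lift_comp]

theorem Sub.lift_ren_comp {Γ Δ E} (r : Ren Γ Δ) (σ' : Sub S Δ E) (σ : Ty) :
    (fun τ v => Sub.lift σ' σ τ (Ren.lift r σ τ v)) = Sub.lift (fun τ v => σ' τ (r τ v)) σ := by
  funext τ v; cases v <;> rfl

theorem subst_rename : ∀ {Γ Δ E : List Ty} {τ} (r : Ren Γ Δ) (σ' : Sub S Δ E) (u : Tm S Γ τ),
    subst σ' (rename r u) = subst (fun τ v => σ' τ (r τ v)) u
  | _, _, _, _, _, _, .var _ => rfl
  | _, _, _, _, _, _, .par _ => rfl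
  | _, _, _, _, _, _, .eq _ => rfl
  | _, _, _, _, r, σ', .app f a => by
      rw [rename, subst, subst, subst_rename r σ' f, subst_rename r σ' a]
  | _, _, _, _, r, σ', .lam b => by
      rw [rename, subst, subst, subst_rename (Ren.lift r _) (Sub.lift σ' _) b,
        Sub.lift_ren_comp]

theorem Sub.lift_var {Γ Δ} (r : Ren Γ Δ) (σ : Ty) :
    Sub.lift (fun τ v => Tm.var (S := S) (r τ v)) σ
      = fun τ v => Tm.var (Ren.lift r σ τ v) := by
  funext τ v; cases v <;> rfl

theorem subst_var : ∀ {Γ Δ : List Ty} {τ} (r : Ren Γ Δ) (u : Tm S Γ τ),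
    subst (fun τ v => Tm.var (r τ v)) u = rename r u
  | _, _, _, _, .var _ => rfl
  | _, _, _, _, .par _ => rfl
  | _, _, _, _, .eq _ => rfl
  | _, _, _, r, .app f a => by
      rw [rename, subst, subst_var r f, subst_var r a]
  | _, _, _, r, .lam b => by
      rw [rename, subst, Sub.lift_var, subst_var (Ren.lift r _) b]

theorem rename_of_closed {Γ τ} (r : Ren [] Γ) (u : Tm S [] τ) : rename r u = wk0 u := by
  have : r = Ren.fromEmpty := by funext τ v; exact nomatch v
  rw [this]; rfl

theorem subst_of_closed {Γ τ} (σ : Sub S [] Γ) (u : Tm S [] τ) : subst σ u = wk0 u := by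
  have : σ = fun τ v => Tm.var (Ren.fromEmpty τ v) := by funext τ v; exact nomatch v
  rw [this, subst_var]; rfl

theorem wk0_nil {τ} (u : Tm S [] τ) : (wk0 u : Tm S [] τ) = u := by
  have h := rename_of_closed (Γ := []) (fun _ v => v) u
  rw [rename_id] at h
  exact h.symm

theorem subst_wk0 {Γ Δ τ} (σ : Sub S Γ Δ) (u : Tm S [] τ) :
    subst σ (wk0 u) = wk0 u := by
  rw [wk0, subst_rename, subst_of_closed]

theorem rename_wk0 {Γ Δ τ} (r : Ren Γ Δ) (u : Tm S [] τ) :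
    rename r (wk0 u) = wk0 u := by
  rw [wk0, rename_rename, rename_of_closed]

/-- left component of the expanded conjunction. -/
def L0 {Γ} : Tm S Γ (arr (arr o (arr o o)) o) :=
  .lam (.app (.app (.var .vz) topT) topT)

/-- right component of the expanded conjunction. -/
def R0 (s t : Tm S [] o) : Tm S [] (arr (arr o (arr o o)) o) :=
  .lam (.app (.app (.var .vz) (wk0 s)) (wk0 t))

end AndMemAux

theorem and_red (s t : Tm S [] Ty.o) :
    Conv (Tm.app (Tm.app andC s) t)
      (eqT (arr (arr o (arr o o)) o) L0 (R0 s t)) := by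
  refine Conv.trans (Conv.appCongr (Conv.beta _ s) (Conv.refl t)) ?_
  refine Conv.trans (Conv.beta _ t) ?_
  have e : (subst1 t (subst (Sub.lift (Sub.single s) Ty.o)
      (eqT (arr (arr o (arr o o)) o)
        (.lam (.app (.app (.var .vz) topT) topT))
        (.lam (.app (.app (.var .vz) (.var (.vs (.vs .vz)))) (.var (.vs .vz)))))) : Tm S [] Ty.o)
      = eqT (arr (arr o (arr o o)) o) L0 (R0 s t) := by
    simp [subst1, subst, Sub.lift, Sub.single, eqT, topT, L0, R0,
      subst_rename, rename_rename, subst_of_closed, rename_of_closed, subst_wk0, rename_wk0]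
  rw [e]
  exact Conv.refl _

theorem conv_L0 (p : Tm S [] (arr o (arr o o))) :
    Conv (.app L0 p) (.app (.app p topT) topT) :=
  Conv.beta _ p

theorem conv_R0 (s t : Tm S [] Ty.o) (p : Tm S [] (arr o (arr o o))) :
    Conv (.app (R0 s t) p) (.app (.app p s) t) := by
  have e : subst1 p (.app (.app (.var .vz) (wk0 s)) (wk0 t))
      = Tm.app (Tm.app p s) t := by
    simp [subst1, subst, Sub.single, subst_wk0, wk0_nil]
  exact e ▸ Conv.beta _ p

theorem conv_proj1 (s t : Tm S [] Ty.o) :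
    Conv (Tm.app (Tm.app (.lam (.lam (.var (.vs .vz)))) s) t) s := by
  refine Conv.trans (Conv.appCongr (Conv.beta _ s) (Conv.refl t)) ?_
  refine Conv.trans (Conv.beta _ t) ?_
  have e : subst1 t (subst (Sub.lift (Sub.single s) Ty.o) (Tm.var (Var.vs Var.vz))) = s := by
    simp [subst1, subst, Sub.lift, Sub.single, subst_rename, subst_of_closed, wk0_nil]
  rw [e]
  exact Conv.refl s

theorem conv_proj2 (s t : Tm S [] Ty.o) :
    Conv (Tm.app (Tm.app (.lam (.lam (.var .vz))) s) t) t :=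
  Conv.trans (Conv.appCongr (Conv.beta _ s) (Conv.refl t)) (Conv.beta _ t)

/-- If `(s ∧ t) ∈ H`, then `s ∈ H` and `t ∈ H`. -/
theorem and_mem (hH : Acceptable S H) (s t : Tm S [] Ty.o)
    (h : Tm.app (Tm.app andC s) t ∈ H) : s ∈ H ∧ t ∈ H := by
  have hE : eqT (arr (arr o (arr o o)) o) L0 (R0 s t) ∈ H :=
    hH.nabla_betaEta _ _ (and_red s t) h
  constructor
  · have hf := hH.nabla_f_pos _ _ hE (.lam (.lam (.var (.vs .vz))))
    have c : Conv (eqT Ty.o (.app L0 (.lam (.lam (.var (.vs .vz)))))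
        (.app (R0 s t) (.lam (.lam (.var (.vs .vz)))))) (eqT Ty.o topT s) :=
      Conv.appCongr
        (Conv.appCongr (Conv.refl _)
          (Conv.trans (conv_L0 _) (conv_proj1 topT topT)))
        (Conv.trans (conv_R0 s t _) (conv_proj1 s t))
    have hm : eqT Ty.o topT s ∈ H := hH.nabla_betaEta _ _ c hf
    rcases hH.nabla_b_pos _ _ hm with ⟨_, hs⟩ | ⟨hneg, _⟩
    · exact hs
    · exact absurd hneg (hH.nabla_eq_r (Tm.eq Ty.o))
  · have hf := hH.nabla_f_pos _ _ hE (.lam (.lam (.var .vz)))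
    have c : Conv (eqT Ty.o (.app L0 (.lam (.lam (.var .vz))))
        (.app (R0 s t) (.lam (.lam (.var .vz))))) (eqT Ty.o topT t) :=
      Conv.appCongr
        (Conv.appCongr (Conv.refl _)
          (Conv.trans (conv_L0 _) (conv_proj2 topT topT)))
        (Conv.trans (conv_R0 s t _) (conv_proj2 s t))
    have hm : eqT Ty.o topT t ∈ H := hH.nabla_betaEta _ _ c hf
    rcases hH.nabla_b_pos _ _ hm with ⟨_, ht⟩ | ⟨hneg, _⟩
    · exact ht
    · exact absurd hneg (hH.nabla_eq_r (Tm.eq Ty.o))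

end HintikkaHOL
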